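/- Let A = {a1 < a2 < ...} and B = {b1 < b2 < ...} be two infinite sequences of positive integers with b1 > 1 such that P(A) = ℕ \ B, and let k be the index with a_k < b1 < a_{k+1}. If b2 ≥ 3·b1 + 5, then b2 ≥ 2·a_{k+2} + b1 + 1. -/

import Mathlib

/-- The set of all finite subset sums of a set of positive integers
(finite sums of distinct elements; the empty sum 0 is included). -/
def subsetSums (S : Set ℕ) : Set ℕ :=
  {n | ∃ F : Finset ℕ, ↑F ⊆ S ∧ ∑ x ∈ F, x = n}

/-!
Write `β = b₁`, `γ = b₂`, `c = a_{k+2}`, `d = a_{k+3}`. Every `n < β` is a subset sum, and by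
the greedy criterion this forces the subset sums of `A ∩ [0, β)` to form an interval, which must
stop short of `β`. Looking at which elements of `A` can appear in representations of `β + 1`,
`2β + 1` and `c + β` then gives `a_{k+1} = β + 1`, `c ≤ 2β + 1` and `d ≤ c + β`. Finally, for
`x < y` in `A` with `β < x`, either `γ < x + y` or `γ ≥ x + y + β`: otherwise `γ - x - y < β` is a
subset sum using only elements below `x`, and adding `x` and `y` represents `γ`. Applied to the
pairs `(β + 1, c)`, `(β + 1, d)` and `(c, d)`, this yields the bound.
-/

open Set

section SubsetSums

variable {S T : Set ℕ} {m x : ℕ}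

theorem subsetSums_mono (h : S ⊆ T) : subsetSums S ⊆ subsetSums T := by
  rintro n ⟨F, hF, rfl⟩
  exact ⟨F, hF.trans h, rfl⟩

theorem subsetSums_empty : subsetSums ∅ = {0} := by
  ext n
  simp [subsetSums]

theorem mem_subsetSums_of_mem (hx : x ∈ S) : x ∈ subsetSums S :=
  ⟨{x}, by simpa using hx, by simp⟩

theorem mem_subsetSums_of_inter_Iic_subset (hm : m ∈ subsetSums S) (h : S ∩ Iic m ⊆ T) :
    m ∈ subsetSums T := by
  obtain ⟨F, hF, rfl⟩ := hm
  exact ⟨F, fun y hy => h ⟨hF hy, Finset.single_le_sum_of_canonicallyOrdered (f := id) hy⟩, rfl⟩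

theorem add_mem_subsetSums_insert (hm : m ∈ subsetSums S) (hx : x ∉ S) :
    m + x ∈ subsetSums (insert x S) := by
  obtain ⟨F, hF, rfl⟩ := hm
  have hxF : x ∉ F := fun h => hx (hF h)
  refine ⟨insert x F, ?_, by rw [Finset.sum_insert hxF, add_comm]⟩
  rw [Finset.coe_insert]
  exact insert_subset_insert hF

theorem mem_or_sub_mem_of_mem_subsetSums_insert (hm : m ∈ subsetSums (insert x S)) :
    m ∈ subsetSums S ∨ x ≤ m ∧ m - x ∈ subsetSums S := by
  obtain ⟨F, hF, rfl⟩ := hm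
  by_cases hxF : x ∈ F
  · have hsum := Finset.sum_erase_add F (fun y => y) hxF
    refine Or.inr ⟨Finset.single_le_sum_of_canonicallyOrdered (f := id) hxF, F.erase x, ?_,
      by omega⟩
    intro y hy
    obtain ⟨hyx, hyF⟩ := Finset.mem_erase.mp hy
    exact (hF hyF).resolve_left hyx
  · exact Or.inl ⟨F, fun y hy => (hF hy).resolve_left (ne_of_mem_of_not_mem hy hxF), rfl⟩

theorem add_add_mem_subsetSums {y : ℕ} (hm : m ∈ subsetSums S) (hx : x ∈ S) (hy : y ∈ S)
    (hmx : m < x) (hxy : x < y) : m + x + y ∈ subsetSums S := by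
  have hm' : m ∈ subsetSums (S ∩ Iic m) := mem_subsetSums_of_inter_Iic_subset hm subset_rfl
  have hmx' := add_mem_subsetSums_insert hm' fun h => (not_le.mpr hmx) h.2
  have hmxy := add_mem_subsetSums_insert hmx' (x := y) <| by
    rintro (h | h)
    · exact hxy.ne' h
    · exact not_le.mpr (hmx.trans hxy) h.2
  exact subsetSums_mono (insert_subset hy (insert_subset hx inter_subset_left)) hmxy

theorem subsetSums_insert_eq_Iic {σ : ℕ} (hS : subsetSums S = Iic σ) (hx : x ∉ S)
    (hxσ : x ≤ σ + 1) : subsetSums (insert x S) = Iic (σ + x) := by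
  ext n
  rw [mem_Iic]
  constructor
  · intro hn
    rcases mem_or_sub_mem_of_mem_subsetSums_insert hn with h | ⟨_, h⟩ <;>
      rw [hS, mem_Iic] at h <;> omega
  · intro hn
    by_cases hnσ : n ≤ σ
    · exact subsetSums_mono (subset_insert _ _) (hS ▸ hnσ)
    · have hsub : n - x ∈ subsetSums S := by rw [hS, mem_Iic]; omega
      simpa [Nat.sub_add_cancel (by omega : x ≤ n)] using add_mem_subsetSums_insert hsub hx

theorem exists_subsetSums_inter_Iio_eq_Iic {N : ℕ} (hrep : ∀ n < N, n ∈ subsetSums S) :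
    ∀ M ≤ N, ∃ σ, subsetSums (S ∩ Iio M) = Iic σ := by
  intro M
  induction M with
  | zero =>
    refine fun _ => ⟨0, ?_⟩
    ext n
    simp [subsetSums_empty]
  | succ M ih =>
    intro hM
    obtain ⟨σ, hσ⟩ := ih (by omega)
    rw [show Iio (M + 1) = insert M (Iio M) from Order.Iio_succ_eq_insert M]
    by_cases hMS : M ∈ S
    · -- otherwise `σ + 1 < N` would be a subset sum of elements below `M`, all of them used in `σ`
      have hMσ : M ≤ σ + 1 := by
        by_contra h
        have : σ + 1 ∈ subsetSums (S ∩ Iio M) :=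
          mem_subsetSums_of_inter_Iic_subset (hrep (σ + 1) (by omega))
            (inter_subset_inter_right S (Iic_subset_Iio.mpr (by omega)))
        rw [hσ, mem_Iic] at this
        omega
      rw [inter_insert_of_mem hMS]
      exact ⟨σ + M, subsetSums_insert_eq_Iic hσ (fun h => lt_irrefl M h.2) hMσ⟩
    · rw [inter_insert_of_notMem hMS]
      exact ⟨σ, hσ⟩

theorem lt_of_mem_subsetSums_inter_Iio {N : ℕ} (hrep : ∀ n < N, n ∈ subsetSums S)
    (hN : N ∉ subsetSums S) (hm : m ∈ subsetSums (S ∩ Iio N)) : m < N := by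
  obtain ⟨σ, hσ⟩ := exists_subsetSums_inter_Iio_eq_Iic hrep N le_rfl
  by_contra h
  rw [hσ, mem_Iic] at hm
  refine hN (subsetSums_mono (inter_subset_left (t := Iio N)) ?_)
  rw [hσ, mem_Iic]
  omega

end SubsetSums

section Gaps

variable {A L : Set ℕ} {β γ c d m x y : ℕ}

theorem lt_or_le_and_lt_of_mem_subsetSums_insert (hL : ∀ n ∈ subsetSums L, n < β)
    (hm : m ∈ subsetSums (insert x L)) : m < β ∨ x ≤ m ∧ m < x + β := by
  rcases mem_or_sub_mem_of_mem_subsetSums_insert hm with h | ⟨hxm, h⟩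
  · exact Or.inl (hL m h)
  · have := hL _ h
    omega

theorem add_one_mem_of_mem_subsetSums (hL : ∀ n ∈ subsetSums (A ∩ Iio β), n < β)
    (hβA : β ∉ A) (h : β + 1 ∈ subsetSums A) : β + 1 ∈ A := by
  by_contra hA
  have hsub : A ∩ Iic (β + 1) ⊆ A ∩ Iio β := by
    rintro y ⟨hy, hyle⟩
    have : y ≠ β := fun e => hβA (e ▸ hy)
    have : y ≠ β + 1 := fun e => hA (e ▸ hy)
    exact ⟨hy, show y < β by simp only [mem_Iic] at hyle; omega⟩
  have := hL _ (mem_subsetSums_of_inter_Iic_subset h hsub)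
  omega

theorem le_two_mul_add_one_of_mem_subsetSums (hL : ∀ n ∈ subsetSums (A ∩ Iio β), n < β)
    (hβA : β ∉ A) (hc : ∀ x ∈ A, x < c → x ≤ β + 1) (h : 2 * β + 1 ∈ subsetSums A) :
    c ≤ 2 * β + 1 := by
  by_contra hlt
  have hsub : A ∩ Iic (2 * β + 1) ⊆ insert (β + 1) (A ∩ Iio β) := by
    rintro y ⟨hy, hyle⟩
    have := hc y hy (by simp only [mem_Iic] at hyle; omega)
    have : y ≠ β := fun e => hβA (e ▸ hy)
    rcases eq_or_ne y (β + 1) with e | e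
    · exact Or.inl e
    · exact Or.inr ⟨hy, show y < β by omega⟩
  have := lt_or_le_and_lt_of_mem_subsetSums_insert hL (mem_subsetSums_of_inter_Iic_subset h hsub)
  omega

theorem le_add_of_mem_subsetSums (hL : ∀ n ∈ subsetSums (A ∩ Iio β), n < β)
    (hβA : β ∉ A) (hc : ∀ x ∈ A, x < c → x ≤ β + 1) (hd : ∀ x ∈ A, x < d → x ≤ c)
    (hβc : β + 1 < c) (h : c + β ∈ subsetSums A) : d ≤ c + β := by
  by_contra hlt
  have hsub : A ∩ Iic (c + β) ⊆ insert c (insert (β + 1) (A ∩ Iio β)) := by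
    rintro y ⟨hy, hyle⟩
    have hyc := hd y hy (by simp only [mem_Iic] at hyle; omega)
    have : y ≠ β := fun e => hβA (e ▸ hy)
    rcases eq_or_ne y c with e | e
    · exact Or.inl e
    have := hc y hy (by omega)
    rcases eq_or_ne y (β + 1) with e' | e'
    · exact Or.inr (Or.inl e')
    · exact Or.inr (Or.inr ⟨hy, show y < β by omega⟩)
  rcases mem_or_sub_mem_of_mem_subsetSums_insert (mem_subsetSums_of_inter_Iic_subset h hsub)
    with h' | ⟨-, h'⟩
  · have := lt_or_le_and_lt_of_mem_subsetSums_insert hL h'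
    omega
  · rw [Nat.add_sub_cancel_left] at h'
    have := lt_or_le_and_lt_of_mem_subsetSums_insert hL h'
    omega

theorem lt_add_or_add_add_le (hγ : γ ∉ subsetSums A)
    (hrep : ∀ n < γ, n ≠ β → n ∈ subsetSums A) (hx : x ∈ A) (hy : y ∈ A) (hβx : β < x)
    (hxy : x < y) : γ < x + y ∨ x + y + β ≤ γ := by
  by_contra! h
  have hm := add_add_mem_subsetSums (hrep (γ - x - y) (by omega) (by omega)) hx hy (by omega) hxy
  exact hγ (by rwa [show γ - x - y + x + y = γ by omega] at hm)

end Gaps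

theorem StrictMono.le_of_mem_range_of_lt_succ {α : Type*} [Preorder α] {a : ℕ → α}
    (ha : StrictMono a) {x : α} {j : ℕ} (hx : x ∈ range a) (h : x < a (j + 1)) : x ≤ a j := by
  obtain ⟨i, rfl⟩ := hx
  exact ha.monotone (Nat.lt_succ_iff.mp (ha.lt_iff_lt.mp h))

theorem mem_subsetSums_of_lt_of_ne {A : Set ℕ} {b : ℕ → ℕ} (hb : StrictMono b)
    (hAB : subsetSums A = univ \ range b) {n : ℕ} (hn : n < b 1) (hn0 : n ≠ b 0) :
    n ∈ subsetSums A := by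
  rw [hAB]
  refine ⟨trivial, ?_⟩
  rintro ⟨_ | j, rfl⟩
  · exact hn0 rfl
  · exact absurd (hb.monotone (Nat.le_add_left 1 j)) (by omega)

theorem stmt7_general (a b : ℕ → ℕ) (ha : StrictMono a)
    (hb : StrictMono b)
    (hPA : subsetSums (Set.range a) = Set.univ \ Set.range b)
    (k : ℕ) (hk1 : a k < b 0) (hk2 : b 0 < a (k + 1))
    (hb2 : 3 * b 0 + 5 ≤ b 1) :
    2 * a (k + 2) + b 0 + 1 ≤ b 1 := by
  have hβ : b 0 ∉ subsetSums (range a) := fun h => (hPA ▸ h).2 ⟨0, rfl⟩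
  have hγ : b 1 ∉ subsetSums (range a) := fun h => (hPA ▸ h).2 ⟨1, rfl⟩
  have hrep : ∀ n < b 1, n ≠ b 0 → n ∈ subsetSums (range a) :=
    fun _ => mem_subsetSums_of_lt_of_ne hb hPA
  have hL : ∀ n ∈ subsetSums (range a ∩ Iio (b 0)), n < b 0 :=
    fun n => lt_of_mem_subsetSums_inter_Iio (fun n hn => hrep n (by omega) hn.ne) hβ
  have hβA : b 0 ∉ range a := fun h => hβ (mem_subsetSums_of_mem h)
  have hsucc := add_one_mem_of_mem_subsetSums hL hβA (hrep _ (by omega) (by omega))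
  have hak1 : a (k + 1) = b 0 + 1 := by
    have := ha.le_of_mem_range_of_lt_succ (j := k) hsucc
    omega
  have hc : ∀ x ∈ range a, x < a (k + 2) → x ≤ b 0 + 1 :=
    fun x hx h => hak1 ▸ ha.le_of_mem_range_of_lt_succ hx h
  have hd : ∀ x ∈ range a, x < a (k + 3) → x ≤ a (k + 2) :=
    fun x hx h => ha.le_of_mem_range_of_lt_succ hx h
  have hcd : a (k + 1) < a (k + 2) ∧ a (k + 2) < a (k + 3) := ⟨ha (by omega), ha (by omega)⟩
  have hc2 := le_two_mul_add_one_of_mem_subsetSums hL hβA hc (hrep _ (by omega) (by omega))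
  have hd2 := le_add_of_mem_subsetSums hL hβA hc hd (by omega) (hrep _ (by omega) (by omega))
  have h1 := lt_add_or_add_add_le hγ hrep hsucc ⟨k + 2, rfl⟩ (by omega) (by omega)
  have h2 := lt_add_or_add_add_le hγ hrep hsucc ⟨k + 3, rfl⟩ (by omega) (by omega)
  have h3 := lt_add_or_add_add_le hγ hrep ⟨k + 2, rfl⟩ ⟨k + 3, rfl⟩ (by omega) (by omega)
  omega

/-- If `b₂ ≥ 3b₁+5` then `b₂ ≥ 2a_{k+2} + b₁ + 1`.
Here `a i`, `b i` are the `(i+1)`-st elements of `A`, `B`. -/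
theorem stmt7 (a b : ℕ → ℕ) (ha : StrictMono a) (hapos : ∀ i, 0 < a i)
    (hb : StrictMono b) (hb1 : 1 < b 0)
    (hPA : subsetSums (Set.range a) = Set.univ \ Set.range b)
    (k : ℕ) (hk1 : a k < b 0) (hk2 : b 0 < a (k + 1))
    (hb2 : 3 * b 0 + 5 ≤ b 1) :
    2 * a (k + 2) + b 0 + 1 ≤ b 1 :=
  stmt7_general a b ha hb hPA k hk1 hk2 hb2
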